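/- arXiv:2003.07491 — 3 statements merged into one kernel-verified Lean document; each statement's English description precedes it below -/
import Mathlib

section
/- Let n ≥ 1 and let k : ZMod n → ℕ be a function with ∑_{i} k(i) = n. Then there exists z ∈ ZMod n such that for every i with 1 ≤ i ≤ n − 1, we have ∑_{j=1}^{i} k(z − j) ≤ i. -/
/-!
Put `g x := k x - 1`, so that `∑ g = 0`, and unroll `g` to an `n`-periodic sequence on `ℕ`.
Its partial sums `S t` are then `n`-periodic as well, so they attain a minimum at some `t₀`.
The sum of `g` over the `i` places just below `t₀` (read modulo `n`) is a difference
`S m - S (m - i)` with `m ≡ t₀`, hence `S m = S t₀`, and so it is `≤ 0`.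
-/

open Finset Function

theorem Finset.sum_Icc_tsub_eq_sum_Ico {M : Type*} [AddCommMonoid M] (f : ℕ → M) {m i : ℕ}
    (h : i ≤ m) : ∑ j ∈ Icc 1 i, f (m - j) = ∑ j ∈ Ico (m - i) m, f j := by
  rw [← Ico_add_one_right_eq_Icc, sum_Ico_reflect f 1 (by omega), Nat.add_sub_add_right,
    Nat.add_sub_cancel]

theorem ZMod.sum_univ_eq_sum_range {M : Type*} [AddCommMonoid M] {n : ℕ} [NeZero n]
    (g : ZMod n → M) : ∑ x, g x = ∑ j ∈ range n, g j :=
  sum_nbij' ZMod.val Nat.cast (by simp [ZMod.val_lt]) (by simp)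
    (by simp) (fun j hj => ZMod.val_natCast_of_lt (mem_range.1 hj)) (by simp)

theorem Function.Periodic.sum_range {M : Type*} [AddCommMonoid M] {f : ℕ → M} {n : ℕ}
    (hf : Periodic f n) (h0 : ∑ j ∈ range n, f j = 0) :
    Periodic (fun t => ∑ j ∈ range t, f j) n := fun t => by
  rw [add_comm t n]
  simp only [sum_range_add, h0, zero_add]
  exact sum_congr rfl fun j _ => by rw [add_comm, hf]

theorem Function.Periodic.exists_forall_le_nat {α : Type*} [LinearOrder α] {f : ℕ → α} {n : ℕ}
    (hf : Periodic f n) (hn : n ≠ 0) : ∃ t₀, ∀ t, f t₀ ≤ f t := by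
  have hpos := Nat.pos_of_ne_zero hn
  obtain ⟨t₀, -, ht₀⟩ := exists_min_image (range n) f ⟨0, mem_range.2 hpos⟩
  exact ⟨t₀, fun t => hf.map_mod_nat t ▸ ht₀ _ (mem_range.2 (Nat.mod_lt t hpos))⟩

theorem ZMod.exists_forall_sum_Icc_sub_nonpos {M : Type*} [AddCommGroup M] [LinearOrder M]
    [IsOrderedAddMonoid M] {n : ℕ} [NeZero n] (g : ZMod n → M) (hg : ∑ x, g x = 0) :
    ∃ z : ZMod n, ∀ i : ℕ, ∑ j ∈ Icc 1 i, g (z - j) ≤ 0 := by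
  set S : ℕ → M := fun t => ∑ j ∈ range t, g j
  have hgper : Periodic (fun j : ℕ => g j) n := fun j => by simp
  have hS : Periodic S n := hgper.sum_range (by rwa [← ZMod.sum_univ_eq_sum_range])
  obtain ⟨t₀, ht₀⟩ := hS.exists_forall_le_nat (NeZero.ne n)
  refine ⟨t₀, fun i => ?_⟩
  -- Any `m ≡ t₀ (mod n)` with `i ≤ m` works; it keeps `m - j` free of truncated subtraction.
  set m := t₀ + i * n
  have him : i ≤ m := le_add_left (Nat.le_mul_of_pos_right i (NeZero.pos n))
  have hSm : S m = S t₀ := by simpa only [Nat.cast_id] using hS.nat_mul i t₀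
  have hcast : ∀ j ∈ Icc 1 i, ((t₀ : ZMod n) - j) = ((m - j : ℕ) : ZMod n) := fun j hj => by
    rw [Nat.cast_sub (by simp at hj; omega)]
    simp [m]
  calc ∑ j ∈ Icc 1 i, g (t₀ - j)
      = ∑ j ∈ Icc 1 i, g ((m - j : ℕ) : ZMod n) := sum_congr rfl fun j hj => by rw [hcast j hj]
    _ = S m - S (m - i) := by
      rw [sum_Icc_tsub_eq_sum_Ico (fun j : ℕ => g j) him, sum_Ico_eq_sub _ (Nat.sub_le m i)]
    _ = S t₀ - S (m - i) := by rw [hSm]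
    _ ≤ 0 := sub_nonpos.2 (ht₀ _)

theorem stmt_0_general (n : ℕ) [NeZero n] (k : ZMod n → ℕ)
    (hk : ∑ i : ZMod n, k i = n) :
    ∃ z : ZMod n, ∀ i : ℕ, 1 ≤ i → i ≤ n - 1 →
      ∑ j ∈ Finset.Icc 1 i, k (z - (j : ZMod n)) ≤ i := by
  obtain ⟨z, hz⟩ := ZMod.exists_forall_sum_Icc_sub_nonpos (fun x => (k x : ℤ) - 1)
    (by simp [sum_sub_distrib, ← Nat.cast_sum, hk])
  refine ⟨z, fun i _ _ => ?_⟩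
  have := hz i
  simp only [sum_sub_distrib, sum_const, Nat.card_Icc, add_tsub_cancel_right, nsmul_one,
    sub_nonpos] at this
  exact_mod_cast this

theorem stmt_0 (n : ℕ) (hn : 1 ≤ n) [NeZero n] (k : ZMod n → ℕ)
    (hk : ∑ i : ZMod n, k i = n) :
    ∃ z : ZMod n, ∀ i : ℕ, 1 ≤ i → i ≤ n - 1 →
      ∑ j ∈ Finset.Icc 1 i, k (z - (j : ZMod n)) ≤ i :=
  stmt_0_general n k hk
end

section
/- Consider the following game: n players each hold a state in ZMod n; at each step an arbitrary pair of players is chosen, and if they have equal states one of them increments its state by 1 (mod n), otherwise nothing changes. Then for any infinite execution of this game starting from any initial assignment of states, there exists z ∈ ZMod n such that no player ever changes its state from z − 1 to z. -/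
/-- One step of the game: either nothing changes, or exactly one player `p`,
which shares its state with some other player `q`, increments its state by 1 (mod n). -/
def GameStep (n : ℕ) (s s' : Fin n → ZMod n) : Prop :=
  (∀ p, s' p = s p) ∨
    ∃ p, (∀ q, q ≠ p → s' q = s q) ∧ s' p = s p + 1 ∧ ∃ q, q ≠ p ∧ s q = s p

theorem stmt_1 (n : ℕ) [NeZero n] (s : ℕ → Fin n → ZMod n)
    (hstep : ∀ t, GameStep n (s t) (s (t + 1))) :
    ∃ z : ZMod n, ∀ t p,
      ¬(s t p = z - 1 ∧ s (t + 1) p = z ∧ s t p ≠ s (t + 1) p) := by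
  classical
  -- occupancy of a value is monotone in time
  have mono : ∀ (v : ZMod n) (t t' : ℕ), t ≤ t' → (∃ p, s t p = v) → (∃ p, s t' p = v) := by
    intro v t t' hle h
    induction t', hle using Nat.le_induction with
    | base => exact h
    | succ t' hle ih =>
      obtain ⟨r, hr⟩ := ih
      rcases hstep t' with hid | ⟨p, hq, hp, q, hqp, hsq⟩
      · exact ⟨r, (hid r).trans hr⟩
      · by_cases hrp : r = p
        · exact ⟨q, (hq q hqp).trans (hsq.trans (hrp ▸ hr))⟩
        · exact ⟨r, (hq r hrp).trans hr⟩
  -- if the configuration is injective, it is frozen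
  have frz : ∀ t, Function.Injective (s t) → s (t + 1) = s t := by
    intro t hinj
    rcases hstep t with hid | ⟨p, hq, hp, q, hqp, hsq⟩
    · funext r; exact hid r
    · exact absurd (hinj hsq) hqp
  have frz2 : ∀ T, Function.Injective (s T) → ∀ t, T ≤ t → s t = s T := by
    intro T hinj t hle
    induction t, hle using Nat.le_induction with
    | base => rfl
    | succ t hle ih =>
      have : Function.Injective (s t) := by rw [ih]; exact hinj
      rw [frz t this, ih]
  by_cases hB : ∃ T, ∀ v : ZMod n, ∃ p, s T p = v
  · -- at some time everything is occupied; take the first such time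
    set T := Nat.find hB with hTdef
    have hT : ∀ v : ZMod n, ∃ p, s T p = v := Nat.find_spec hB
    have hsurj : Function.Surjective (s T) := hT
    have hcard : Fintype.card (Fin n) = Fintype.card (ZMod n) := by
      simp [ZMod.card]
    have hinj : Function.Injective (s T) :=
      ((Fintype.bijective_iff_surjective_and_card _).mpr ⟨hsurj, hcard⟩).1
    rcases Nat.eq_zero_or_pos T with hT0 | hTpos
    · -- frozen from the start: no player ever changes
      refine ⟨0, fun t p ⟨h1, h2, h3⟩ => h3 ?_⟩
      have e1 : s t = s T := frz2 T hinj t (hT0 ▸ Nat.zero_le t)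
      have e2 : s (t + 1) = s T := frz2 T hinj (t + 1) (hT0 ▸ Nat.zero_le (t + 1))
      rw [e1, e2]
    · -- some value v is empty at time T-1, hence at all earlier times
      have hmin : ¬ ∀ v : ZMod n, ∃ p, s (T - 1) p = v :=
        Nat.find_min hB (by omega)
      push_neg at hmin
      obtain ⟨v, hv⟩ := hmin
      refine ⟨v + 1, fun t p ⟨h1, h2, h3⟩ => ?_⟩
      have hz : (v + 1 : ZMod n) - 1 = v := add_sub_cancel_right v 1
      rw [hz] at h1
      rcases le_or_gt t (T - 1) with hle | hlt
      · obtain ⟨r, hr⟩ := mono v t (T - 1) hle ⟨p, h1⟩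
        exact hv r hr
      · have ht : T ≤ t := by omega
        have e1 : s t = s T := frz2 T hinj t ht
        have e2 : s (t + 1) = s T := frz2 T hinj (t + 1) (le_trans ht (Nat.le_succ t))
        exact h3 (by rw [e1, e2])
  · -- some value is empty at every time; by finiteness one value is empty forever
    push_neg at hB
    choose f hf using hB
    obtain ⟨v, hv⟩ := Finite.exists_infinite_fiber f
    have hv' : (f ⁻¹' {v}).Infinite := Set.infinite_coe_iff.mp hv
    refine ⟨v + 1, fun t p ⟨h1, h2, h3⟩ => ?_⟩
    have hz : (v + 1 : ZMod n) - 1 = v := add_sub_cancel_right v 1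
    rw [hz] at h1
    obtain ⟨t', ht'mem, ht'gt⟩ := hv'.exists_gt t
    obtain ⟨r, hr⟩ := mono v t t' (le_of_lt ht'gt) ⟨p, h1⟩
    have := hf t' r
    rw [Set.mem_preimage, Set.mem_singleton_iff] at ht'mem
    rw [ht'mem] at this
    exact this hr
end

section
/- In the game of n players with states in ZMod n (two equal-state players meet and one increments mod n), a state x ∈ ZMod n has the property that no player can ever change its state from x−1 to x in any execution from the initial configuration with state-counts k if and only if ∑_{j=1}^{i} k(x−j) ≤ i holds for all i ∈ {1,…,n−1}. In particular, the set of such states is uniquely determined by the initial configuration. -/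
open Finset Function

section Counting

variable {α : Type*} [Fintype α]

def CountBelowLE (f : α → ℕ) : Prop := ∀ i, #{a | f a < i} ≤ i

lemma card_filter_update_lt_eq [DecidableEq α] {f : α → ℕ} {p : α} {m i : ℕ}
    (h : f p < i ↔ m < i) :
    #{a | update f p m a < i} = #{a | f a < i} := by
  congr 1
  ext a
  by_cases ha : a = p
  · subst ha; simp [h]
  · simp [ha]

lemma exists_ne_eq_lt_of_lt_card {f : α → ℕ} {i : ℕ} (h : i < #{a | f a < i}) :
    ∃ p q, p ≠ q ∧ f p = f q ∧ f p < i := by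
  obtain ⟨p, hp, q, -, hpq, hf⟩ :=
    exists_ne_map_eq_of_card_lt_of_maps_to (t := range i) (by simpa using h)
      (fun a ha => by simpa using ha)
  exact ⟨p, q, hpq, hf, by simpa using hp⟩

lemma sum_update_sub_one_lt [DecidableEq α] {f : α → ℕ} {p : α} (h : f p ≠ 0) :
    ∑ a, update f p (f p - 1) a < ∑ a, f a := by
  refine sum_lt_sum (fun a _ => ?_) ⟨p, mem_univ p, by rw [update_self]; omega⟩
  by_cases ha : a = p
  · subst ha; simp
  · simp [ha]

lemma exists_card_fiber_eq {β : Type*} [Fintype β] [DecidableEq β] (k : β → ℕ)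
    (hk : ∑ b, k b = Fintype.card α) : ∃ f : α → β, ∀ b, #{a | f a = b} = k b := by
  let e : α ≃ Σ b, Fin (k b) := Fintype.equivOfCardEq (by simp [hk])
  refine ⟨fun a => (e a).1, fun b => ?_⟩
  rw [← Fintype.card_subtype]
  exact (Fintype.card_congr ((e.subtypeEquiv fun _ => Iff.rfl).trans (Equiv.sigmaSubtype b))).trans
    (Fintype.card_fin _)

namespace CountBelowLE

variable {f : α → ℕ} {p q : α}

lemma ne_zero_of_eq [DecidableEq α] (hf : CountBelowLE f) (hpq : p ≠ q) (h : f p = f q) :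
    f p ≠ 0 := by
  intro h0
  have hsub : ({p, q} : Finset α) ⊆ ({a | f a < 1} : Finset α) := by
    intro a
    simp only [mem_insert, mem_singleton, mem_filter, mem_univ, true_and]
    rintro (rfl | rfl) <;> omega
  have hcard := (card_le_card hsub).trans (hf 1)
  rw [card_pair hpq] at hcard
  omega

lemma update_sub_one [DecidableEq α] (hf : CountBelowLE f) (hpq : p ≠ q) (h : f p = f q) :
    CountBelowLE (update f p (f p - 1)) := by
  intro i
  by_cases hi : i = f p
  · -- `p` enters the window `{f < i}`, which has room because `p` and `q` both sit at level `i`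
    have henter : #{a | update f p (f p - 1) a < i} ≤ #{a | f a < i} + 1 := by
      refine (card_le_card fun a ha => ?_).trans (card_insert_le p _)
      by_cases hap : a = p
      · simp [hap]
      · simpa [hap] using ha
    have hroom : #{a | f a < i} + 2 ≤ #{a | f a < i + 1} := by
      have hsub :
          insert p (insert q ({a | f a < i} : Finset α)) ⊆ ({a | f a < i + 1} : Finset α) := by
        intro a
        simp only [mem_insert, mem_filter, mem_univ, true_and]
        rintro (rfl | rfl | ha) <;> omega
      have hp : p ∉ insert q ({a | f a < i} : Finset α) := by
        simp only [mem_insert, hpq, mem_filter, mem_univ, true_and, false_or]; omega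
      have hq : q ∉ ({a | f a < i} : Finset α) := by
        simp only [mem_filter, mem_univ, true_and]; omega
      have hcard := card_le_card hsub
      rwa [card_insert_of_notMem hp, card_insert_of_notMem hq] at hcard
    have := hf (i + 1)
    omega
  · rw [card_filter_update_lt_eq (by omega)]
    exact hf i

end CountBelowLE

end Counting

lemma ZMod.val_sub_one_of_ne_zero {n : ℕ} [NeZero n] {a : ZMod n} (h : a ≠ 0) :
    (a - 1).val = a.val - 1 := by
  have hpos : 0 < a.val := Nat.pos_of_ne_zero ((ZMod.val_ne_zero a).mpr h)
  have hlt := ZMod.val_lt a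
  rw [← ZMod.natCast_zmod_val a, ← Nat.cast_pred hpos, ZMod.val_natCast_of_lt (by omega),
    ZMod.val_natCast_of_lt hlt]

section Game

variable {n : ℕ} {s s' : Fin n → ZMod n}

lemma gameStep_iff :
    GameStep n s s' ↔
      s' = s ∨ ∃ p q, q ≠ p ∧ s q = s p ∧ s' = update s p (s p + 1) := by
  simp only [GameStep, eq_update_iff, ← funext_iff]
  constructor
  · rintro (h | ⟨p, hq, hp, q, hqp, hs⟩)
    · exact Or.inl h
    · exact Or.inr ⟨p, q, hqp, hs, hp, hq⟩
  · rintro (h | ⟨p, q, hqp, hs, hp, hq⟩)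
    · exact Or.inl h
    · exact Or.inr ⟨p, hq, hp, q, hqp, hs⟩

variable {x v : ZMod n}

def depth (x v : ZMod n) : ℕ := (x - 1 - v).val

lemma depth_eq_zero_iff : depth x v = 0 ↔ v = x - 1 := by
  rw [depth, ZMod.val_eq_zero, sub_eq_zero, eq_comm]

lemma depth_sub_natCast {j : ℕ} (hj : 1 ≤ j) (hjn : j ≤ n) : depth x (x - j) = j - 1 := by
  rw [depth, sub_sub_sub_cancel_left, ← Nat.cast_one, ← Nat.cast_sub hj,
    ZMod.val_natCast_of_lt (by omega)]

variable [NeZero n]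

lemma depth_injective (x : ZMod n) : Injective (depth x) :=
  fun _ _ h => sub_right_injective (ZMod.val_injective n h)

lemma depth_add_one (h : depth x v ≠ 0) : depth x (v + 1) = depth x v - 1 := by
  have h' : x - 1 - v ≠ 0 := fun h0 => h (by rw [depth, h0, ZMod.val_zero])
  rw [depth, depth, ← ZMod.val_sub_one_of_ne_zero h', sub_add_eq_sub_sub]

lemma sum_card_fiber_eq_card_depth_lt (s : Fin n → ZMod n) (x : ZMod n) {i : ℕ} (hi : i ≤ n) :
    ∑ j ∈ Icc 1 i, #{p | s p = x - j} = #{p | depth x (s p) < i} := by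
  have hwindow :
      ∑ j ∈ Icc 1 i, #{p | s p = x - j} = ∑ v with depth x v < i, #{p | s p = v} := by
    refine sum_nbij' (fun j => x - j) (fun v => depth x v + 1) ?_ ?_ ?_ ?_ (fun _ _ => rfl)
    · intro j hj
      simp only [mem_Icc, mem_filter, mem_univ, true_and] at hj ⊢
      rw [depth_sub_natCast hj.1 (by omega)]
      omega
    · intro v hv
      simp only [mem_Icc, mem_filter, mem_univ, true_and] at hv ⊢
      omega
    · intro j hj
      simp only [mem_Icc] at hj
      rw [depth_sub_natCast hj.1 (by omega)]
      omega
    · intro v _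
      apply depth_injective x
      rw [depth_sub_natCast (by omega) (by have := ZMod.val_lt (x - 1 - v); rw [depth]; omega)]
      omega
  rw [hwindow, sum_card_fiberwise_eq_card_filter]
  simp

end Game

section Dynamics

variable {n : ℕ} {x : ZMod n} {s s' : Fin n → ZMod n} {p q : Fin n}

lemma depth_comp_update_add_one [NeZero n] (h : depth x (s p) ≠ 0) :
    depth x ∘ update s p (s p + 1) = update (depth x ∘ s) p (depth x (s p) - 1) := by
  funext a
  by_cases ha : a = p
  · subst ha; simp [depth_add_one h]
  · simp [ha]

lemma countBelowLE_depth_iff [NeZero n] (s : Fin n → ZMod n) (x : ZMod n) :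
    CountBelowLE (depth x ∘ s) ↔
      ∀ i, 1 ≤ i → i ≤ n - 1 → ∑ j ∈ Icc 1 i, #{p | s p = x - j} ≤ i := by
  constructor
  · intro h i _ hi
    rw [sum_card_fiber_eq_card_depth_lt s x (by omega)]
    exact h i
  · intro h i
    by_cases hi : i ≤ n - 1
    · rcases Nat.eq_zero_or_pos i with rfl | hi0
      · simp
      · exact (sum_card_fiber_eq_card_depth_lt s x (by omega)).symm.trans_le (h i hi0 hi)
    · exact (card_filter_le _ _).trans (by rw [card_univ, Fintype.card_fin]; omega)

namespace GameStep

lemma countBelowLE_depth [NeZero n] (hs : GameStep n s s') (h : CountBelowLE (depth x ∘ s)) :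
    CountBelowLE (depth x ∘ s') := by
  rcases gameStep_iff.mp hs with rfl | ⟨p, q, hqp, hqs, rfl⟩
  · exact h
  have hd : (depth x ∘ s) p = (depth x ∘ s) q := by simp [hqs]
  rw [depth_comp_update_add_one (h.ne_zero_of_eq hqp.symm hd)]
  exact h.update_sub_one hqp.symm hd

lemma eq_of_eq_sub_one (hs : GameStep n s s') (h : CountBelowLE (depth x ∘ s))
    (hp : s p = x - 1) : s' p = s p := by
  rcases gameStep_iff.mp hs with rfl | ⟨p', q, hqp, hqs, rfl⟩
  · rfl
  by_cases hpp : p = p'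
  · subst hpp
    have hd : (depth x ∘ s) p = (depth x ∘ s) q := by simp [hqs]
    exact absurd (depth_eq_zero_iff.mpr hp) (h.ne_zero_of_eq hqp.symm hd)
  · exact update_of_ne hpp _ _

end GameStep

lemma countBelowLE_depth_of_run [NeZero n] {u : ℕ → Fin n → ZMod n}
    (hu : ∀ t, GameStep n (u t) (u (t + 1))) (h : CountBelowLE (depth x ∘ u 0)) (t : ℕ) :
    CountBelowLE (depth x ∘ u t) := by
  induction t with
  | zero => exact h
  | succ t ih => exact (hu t).countBelowLE_depth ih

def CanCross (x : ZMod n) (s : Fin n → ZMod n) : Prop :=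
  ∃ u : ℕ → Fin n → ZMod n, u 0 = s ∧ (∀ t, GameStep n (u t) (u (t + 1))) ∧
    ∃ t p, u t p = x - 1 ∧ u (t + 1) p = x ∧ u t p ≠ u (t + 1) p

lemma CanCross.of_gameStep (hs : GameStep n s s') (h : CanCross x s') : CanCross x s := by
  obtain ⟨u, rfl, hu, t, p, hcross⟩ := h
  refine ⟨fun | 0 => s | t + 1 => u t, rfl, ?_, t + 1, p, hcross⟩
  rintro (_ | t)
  exacts [hs, hu t]

lemma canCross_of_eq_sub_one (hqp : q ≠ p) (hp : s p = x - 1) (hq : s q = x - 1) :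
    CanCross x s := by
  have : Fact (1 < n) := ⟨by have := Fin.val_ne_of_ne hqp; omega⟩
  have hstep : GameStep n s (update s p x) :=
    gameStep_iff.mpr (Or.inr ⟨p, q, hqp, hq.trans hp.symm, by rw [hp, sub_add_cancel]⟩)
  refine ⟨fun | 0 => s | _ + 1 => update s p x, rfl, ?_, 0, p, by simp [hp]⟩
  rintro (_ | t)
  exacts [hstep, Or.inl fun _ => rfl]

lemma canCross_of_lt_card [NeZero n] {i : ℕ} (h : i < #{p | depth x (s p) < i}) :
    CanCross x s := by
  induction hS : ∑ p, depth x (s p) using Nat.strong_induction_on generalizing s with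
  | _ S ih =>
  obtain ⟨p, q, hpq, hd, hpi⟩ := exists_ne_eq_lt_of_lt_card (f := depth x ∘ s) h
  simp only [comp_apply] at hd hpi
  have hqs : s q = s p := depth_injective x hd.symm
  by_cases h0 : depth x (s p) = 0
  · have hp := depth_eq_zero_iff.mp h0
    exact canCross_of_eq_sub_one hpq.symm hp (hqs.trans hp)
  have hdepth := depth_comp_update_add_one (p := p) h0
  refine CanCross.of_gameStep (gameStep_iff.mpr (Or.inr ⟨p, q, hpq.symm, hqs, rfl⟩))
    (ih _ ?_ ?_ rfl)
  · have hlt := sum_update_sub_one_lt (f := depth x ∘ s) h0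
    rw [comp_apply, ← hdepth] at hlt
    rw [← hS]
    exact hlt
  · have hcard := card_filter_update_lt_eq (f := depth x ∘ s) (i := i) (m := depth x (s p) - 1)
      (p := p) (by rw [comp_apply]; omega)
    rw [← hdepth] at hcard
    exact h.trans_eq hcard.symm

end Dynamics

theorem stmt_2 (n : ℕ) [NeZero n] (k : ZMod n → ℕ)
    (hk : ∑ i : ZMod n, k i = n) (x : ZMod n) :
    (∀ s : ℕ → Fin n → ZMod n,
        (∀ t, GameStep n (s t) (s (t + 1))) →
        (∀ c : ZMod n, (Finset.univ.filter (fun p => s 0 p = c)).card = k c) →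
        ∀ t p, ¬(s t p = x - 1 ∧ s (t + 1) p = x ∧ s t p ≠ s (t + 1) p))
    ↔ (∀ i : ℕ, 1 ≤ i → i ≤ n - 1 →
        ∑ j ∈ Finset.Icc 1 i, k (x - (j : ZMod n)) ≤ i) := by
  have hcond (s : Fin n → ZMod n) (hs : ∀ c, #{p | s p = c} = k c) :
      CountBelowLE (depth x ∘ s) ↔
        ∀ i, 1 ≤ i → i ≤ n - 1 → ∑ j ∈ Icc 1 i, k (x - j) ≤ i := by
    simpa only [hs] using countBelowLE_depth_iff s x
  constructor
  · intro hno
    obtain ⟨s, hs⟩ := exists_card_fiber_eq (α := Fin n) k (by simpa using hk)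
    by_contra hbad
    obtain ⟨i, hi⟩ : ∃ i, i < #{p | depth x (s p) < i} := by
      simpa [CountBelowLE] using (hcond s hs).not.mpr hbad
    obtain ⟨u, rfl, hu, t, p, hcross⟩ := canCross_of_lt_card hi
    exact hno u hu hs t p hcross
  · rintro hcount u hu hu0 t p ⟨hp, -, hne⟩
    have hinv := countBelowLE_depth_of_run hu ((hcond _ hu0).mpr hcount) t
    exact hne ((hu t).eq_of_eq_sub_one hinv hp).symm
end
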